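/- arXiv:1503.00091 — 3 statements merged into one kernel-verified Lean document; each statement's English description precedes it below -/
import Mathlib

section
/- Let G be a (P₆, house, hole, domino)-free graph with efficient dominating set D, and suppose G² contains an induced C_k (k ≥ 4) with real vertices v₁,...,v_k (consecutive ones at G-distance 2) and auxiliary vertices x₁,...,x_k. Then D is disjoint from {v₁,...,v_k, x₁,...,x_k}. -/
open SimpleGraph Finset

variable {V : Type*}

/-- The square of a graph `G`: two distinct vertices are adjacent iff
their distance in `G` is 1 or 2. -/
def square (G : SimpleGraph V) : SimpleGraph V where
  Adj u v := u ≠ v ∧ (G.Adj u v ∨ ∃ w, G.Adj u w ∧ G.Adj w v)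
  symm := by
    constructor
    rintro u v ⟨h, h2 | ⟨w, hw1, hw2⟩⟩
    · exact ⟨h.symm, Or.inl h2.symm⟩
    · exact ⟨h.symm, Or.inr ⟨w, hw2.symm, hw1.symm⟩⟩
  loopless := by constructor; rintro u ⟨h, _⟩; exact h rfl

/-- `D` is an efficient dominating set of `G`: every vertex is dominated
(by closed neighborhoods) by exactly one vertex of `D`. -/
def IsEDS (G : SimpleGraph V) (D : Set V) : Prop :=
  ∀ v : V, ∃! d : V, d ∈ D ∧ (d = v ∨ G.Adj d v)

/-- `G` has no induced subgraph isomorphic to `H`. -/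
def Free {W : Type*} (G : SimpleGraph V) (H : SimpleGraph W) : Prop :=
  IsEmpty (H ↪g G)

/-- The house: the complement of the path on five vertices. -/
def house : SimpleGraph (Fin 5) := (pathGraph 5)ᶜ

/-- The domino: a `P₅` `x₁ … x₅` together with a vertex adjacent to `x₁, x₃, x₅`. -/
def domino : SimpleGraph (Fin 6) :=
  SimpleGraph.fromRel (fun i j =>
    (i, j) ∈ [((0 : Fin 6), (1 : Fin 6)), (1, 2), (2, 3), (3, 4), (5, 0), (5, 2), (5, 4)])

/-- A graph is hole-free if it contains no induced cycle `C_k`, `k ≥ 5`. -/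
def HoleFree (G : SimpleGraph V) : Prop := ∀ k, 5 ≤ k → _root_.Free G (cycleGraph k)

/-- A graph is chordal if it contains no induced cycle `C_k`, `k ≥ 4`. -/
def Chordal (G : SimpleGraph V) : Prop := ∀ k, 4 ≤ k → _root_.Free G (cycleGraph k)

/-! Around each position `i` of the cycle, `v i, x i, v (i + 1), x (i + 1), v (i + 2), x (i + 2),
v (i + 3)` is a path of `G` in which real vertices two steps apart on the cycle are at distance at
least three. Excluding an induced `P₆`, house and hole on this window forces consecutive auxiliary
vertices to be adjacent, and `v i`, `v (i + 3)` to be non-adjacent.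
If `v (i + 1) ∈ D`, then `v i` and `v (i + 2)` are not in `D`; their dominators `a'`, `c'` extend
`v i, x i, x (i + 1), v (i + 2)` to an induced `P₆`. If `x (i + 1) ∈ D`, the dominators of `v i` and
`v (i + 3)` close the path through `x i, x (i + 1), x (i + 2)` (or its shortcut `x i, x (i + 2)`)
into a hole, or extend it to an induced `P₆`. -/

theorem ZMod.natCast_ne_zero_of_lt {k m : ℕ} (h0 : 0 < m) (hm : m < k) : (m : ZMod k) ≠ 0 := by
  rw [Ne, ZMod.natCast_eq_zero_iff]
  exact fun h => absurd (Nat.le_of_dvd h0 h) (by omega)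

section

variable {G : SimpleGraph V}

theorem Free.false_of_induced {W : Type*} {H : SimpleGraph W} (hG : _root_.Free G H) (f : W → V)
    (hadj : ∀ a b, H.Adj a b → G.Adj (f a) (f b))
    (hnadj : ∀ a b, Hᶜ.Adj a b → Gᶜ.Adj (f a) (f b)) : False := by
  have hf : Function.Injective f := by
    intro a b hab
    by_contra hne
    by_cases h : H.Adj a b
    · exact (hadj a b h).ne hab
    · exact (hnadj a b ⟨hne, h⟩).1 hab
  refine hG.false ⟨⟨f, hf⟩, fun {a b} => ⟨fun h => ?_, hadj a b⟩⟩
  by_contra hH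
  have hne : a ≠ b := by rintro rfl; exact G.loopless.irrefl _ h
  exact (hnadj a b ⟨hne, hH⟩).2 h

section

variable {a b c d e f : V}

theorem Free.false_of_induced_path6 (hG : _root_.Free G (pathGraph 6))
    (hab : G.Adj a b) (hbc : G.Adj b c) (hcd : G.Adj c d) (hde : G.Adj d e) (hef : G.Adj e f)
    (hac : Gᶜ.Adj a c) (had : Gᶜ.Adj a d) (hae : Gᶜ.Adj a e) (haf : Gᶜ.Adj a f)
    (hbd : Gᶜ.Adj b d) (hbe : Gᶜ.Adj b e) (hbf : Gᶜ.Adj b f)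
    (hce : Gᶜ.Adj c e) (hcf : Gᶜ.Adj c f) (hdf : Gᶜ.Adj d f) : False := by
  refine hG.false_of_induced ![a, b, c, d, e, f] ?_ ?_ <;> intro i j hij <;>
    fin_cases i <;> fin_cases j <;> simp [pathGraph_adj] at hij <;>
    first | assumption | exact Adj.symm ‹_›

theorem Free.false_of_induced_cycle5 (hG : _root_.Free G (cycleGraph 5))
    (hab : G.Adj a b) (hbc : G.Adj b c) (hcd : G.Adj c d) (hde : G.Adj d e) (hea : G.Adj e a)
    (hac : Gᶜ.Adj a c) (had : Gᶜ.Adj a d) (hbd : Gᶜ.Adj b d) (hbe : Gᶜ.Adj b e)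
    (hce : Gᶜ.Adj c e) : False := by
  refine hG.false_of_induced ![a, b, c, d, e] ?_ ?_ <;> intro i j hij <;>
    fin_cases i <;> fin_cases j <;> simp +decide at hij <;>
    first | assumption | exact Adj.symm ‹_›

theorem Free.false_of_induced_cycle6 (hG : _root_.Free G (cycleGraph 6))
    (hab : G.Adj a b) (hbc : G.Adj b c) (hcd : G.Adj c d) (hde : G.Adj d e) (hef : G.Adj e f)
    (hfa : G.Adj f a) (hac : Gᶜ.Adj a c) (had : Gᶜ.Adj a d) (hae : Gᶜ.Adj a e)
    (hbd : Gᶜ.Adj b d) (hbe : Gᶜ.Adj b e) (hbf : Gᶜ.Adj b f)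
    (hce : Gᶜ.Adj c e) (hcf : Gᶜ.Adj c f) (hdf : Gᶜ.Adj d f) : False := by
  refine hG.false_of_induced ![a, b, c, d, e, f] ?_ ?_ <;> intro i j hij <;>
    fin_cases i <;> fin_cases j <;> simp +decide at hij <;>
    first | assumption | exact Adj.symm ‹_›

theorem Free.false_of_induced_house (hG : _root_.Free G house)
    (hab : G.Adj a b) (hbc : G.Adj b c) (hcd : G.Adj c d) (hda : G.Adj d a)
    (heb : G.Adj e b) (hec : G.Adj e c)
    (hac : Gᶜ.Adj a c) (hbd : Gᶜ.Adj b d) (hea : Gᶜ.Adj e a) (hed : Gᶜ.Adj e d) : False := by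
  refine hG.false_of_induced ![c, a, e, d, b] ?_ ?_ <;> intro i j hij <;>
    fin_cases i <;> fin_cases j <;> simp [house, pathGraph_adj] at hij <;>
    first | assumption | exact Adj.symm ‹_›

end

theorem compl_adj_of_not_square_adj {u w : V} (hne : u ≠ w) (h : ¬(square G).Adj u w) :
    Gᶜ.Adj u w :=
  ⟨hne, fun huw => h ⟨hne, Or.inl huw⟩⟩

theorem compl_adj_of_adj_of_not_square_adj {u w y : V} (hne : u ≠ w)
    (h : ¬(square G).Adj u w) (hy : G.Adj y u) : Gᶜ.Adj y w := by
  refine ⟨?_, fun hyw => h ⟨hne, Or.inr ⟨y, hy.symm, hyw⟩⟩⟩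
  rintro rfl
  exact h ⟨hne, Or.inl hy.symm⟩

theorem compl_adj_of_not_adj {u w y : V} (hy : G.Adj y u) (hyw : Gᶜ.Adj y w) (h : ¬G.Adj u w) :
    Gᶜ.Adj u w := by
  refine ⟨?_, h⟩
  rintro rfl
  exact hyw.2 hy

theorem compl_adj_of_dist_eq_two {u w : V} (h : G.dist u w = 2) : Gᶜ.Adj u w := by
  refine ⟨?_, fun huw => ?_⟩
  · rintro rfl
    simp at h
  · rw [dist_eq_one_iff_adj.mpr huw] at h
    omega

namespace IsEDS

variable {D : Set V} {d₁ d₂ z : V}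

theorem exists_adj_of_notMem (hD : IsEDS G D) (hz : z ∉ D) : ∃ d ∈ D, G.Adj d z := by
  obtain ⟨d, ⟨hd, rfl | hdz⟩, -⟩ := hD z
  · exact absurd hd hz
  · exact ⟨d, hd, hdz⟩

theorem compl_adj_of_adj (hD : IsEDS G D) (h₁ : d₁ ∈ D) (h₂ : d₂ ∈ D) (hne : d₂ ≠ d₁)
    (hz : G.Adj d₁ z) : Gᶜ.Adj d₂ z :=
  not_or.mp fun h => hne <| (hD z).unique ⟨h₂, h⟩ ⟨h₁, Or.inr hz⟩

theorem compl_adj_of_ne (hD : IsEDS G D) (h₁ : d₁ ∈ D) (h₂ : d₂ ∈ D) (hne : d₂ ≠ d₁) :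
    Gᶜ.Adj d₂ d₁ :=
  not_or.mp fun h => hne <| (hD d₁).unique ⟨h₂, h⟩ ⟨h₁, Or.inl rfl⟩

theorem notMem_of_adj_of_adj (hD : IsEDS G D) (h₁ : d₁ ∈ D) (hne : d₁ ≠ d₂)
    (h₁z : G.Adj d₁ z) (hz₂ : G.Adj z d₂) : d₂ ∉ D := fun h₂ =>
  hne <| (hD z).unique ⟨h₁, Or.inr h₁z⟩ ⟨h₂, Or.inr hz₂.symm⟩

end IsEDS

/-- `a, p, b, q, c, r, d` stand for
`v i, x i, v (i + 1), x (i + 1), v (i + 2), x (i + 2), v (i + 3)`. -/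
structure IsWindow (G : SimpleGraph V) (a p b q c r d : V) : Prop where
  adj_ap : G.Adj a p
  adj_pb : G.Adj p b
  adj_bq : G.Adj b q
  adj_qc : G.Adj q c
  adj_cr : G.Adj c r
  adj_rd : G.Adj r d
  compl_adj_ab : Gᶜ.Adj a b
  compl_adj_bc : Gᶜ.Adj b c
  compl_adj_cd : Gᶜ.Adj c d
  ne_ac : a ≠ c
  not_square_adj_ac : ¬(square G).Adj a c
  ne_bd : b ≠ d
  not_square_adj_bd : ¬(square G).Adj b d
  ne_ad : a ≠ d

namespace IsWindow

variable {a p b q c r d y : V} (w : IsWindow G a p b q c r d)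
include w

theorem reverse : IsWindow G d r c q b p a where
  adj_ap := w.adj_rd.symm
  adj_pb := w.adj_cr.symm
  adj_bq := w.adj_qc.symm
  adj_qc := w.adj_bq.symm
  adj_cr := w.adj_pb.symm
  adj_rd := w.adj_ap.symm
  compl_adj_ab := w.compl_adj_cd.symm
  compl_adj_bc := w.compl_adj_bc.symm
  compl_adj_cd := w.compl_adj_ab.symm
  ne_ac := w.ne_bd.symm
  not_square_adj_ac h := w.not_square_adj_bd h.symm
  ne_bd := w.ne_ac.symm
  not_square_adj_bd h := w.not_square_adj_ac h.symm
  ne_ad := w.ne_ad.symm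

theorem compl_adj_c_of_adj (hy : G.Adj y a) : Gᶜ.Adj y c :=
  compl_adj_of_adj_of_not_square_adj w.ne_ac w.not_square_adj_ac hy

theorem compl_adj_a_of_adj (hy : G.Adj y c) : Gᶜ.Adj a y :=
  (compl_adj_of_adj_of_not_square_adj w.ne_ac.symm (fun h => w.not_square_adj_ac h.symm) hy).symm

theorem compl_adj_d_of_adj (hy : G.Adj y b) : Gᶜ.Adj y d :=
  compl_adj_of_adj_of_not_square_adj w.ne_bd w.not_square_adj_bd hy

theorem compl_adj_b_of_adj (hy : G.Adj y d) : Gᶜ.Adj b y :=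
  (compl_adj_of_adj_of_not_square_adj w.ne_bd.symm (fun h => w.not_square_adj_bd h.symm) hy).symm

theorem compl_adj_ac : Gᶜ.Adj a c := compl_adj_of_not_square_adj w.ne_ac w.not_square_adj_ac

theorem compl_adj_bd : Gᶜ.Adj b d := compl_adj_of_not_square_adj w.ne_bd w.not_square_adj_bd

theorem compl_adj_aq : Gᶜ.Adj a q := w.compl_adj_a_of_adj w.adj_qc

theorem compl_adj_ar : Gᶜ.Adj a r := w.compl_adj_a_of_adj w.adj_cr.symm

theorem compl_adj_pc : Gᶜ.Adj p c := w.compl_adj_c_of_adj w.adj_ap.symm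

theorem compl_adj_pd : Gᶜ.Adj p d := w.compl_adj_d_of_adj w.adj_pb

theorem compl_adj_br : Gᶜ.Adj b r := w.compl_adj_b_of_adj w.adj_rd

theorem compl_adj_qd : Gᶜ.Adj q d := w.compl_adj_d_of_adj w.adj_bq.symm

theorem adj_pq (hP : _root_.Free G (pathGraph 6)) (hH : _root_.Free G house)
    (hhole : HoleFree G) : G.Adj p q := by
  by_contra hpq
  replace hpq := compl_adj_of_not_adj w.adj_ap w.compl_adj_aq hpq
  by_cases hpr : G.Adj p r
  · by_cases hqr : G.Adj q r
    · exact hH.false_of_induced_house hpr hqr.symm w.adj_bq.symm w.adj_pb.symm w.adj_cr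
        w.adj_qc.symm hpq w.compl_adj_br.symm w.compl_adj_pc.symm w.compl_adj_bc.symm
    · exact (hhole 5 (by norm_num)).false_of_induced_cycle5 w.adj_pb w.adj_bq w.adj_qc w.adj_cr
        hpr.symm hpq w.compl_adj_pc w.compl_adj_bc w.compl_adj_br
        (compl_adj_of_not_adj w.adj_bq w.compl_adj_br hqr)
  replace hpr := compl_adj_of_not_adj w.adj_ap w.compl_adj_ar hpr
  by_cases hqr : G.Adj q r
  · by_cases had : G.Adj a d
    · exact (hhole 6 (by norm_num)).false_of_induced_cycle6 w.adj_ap w.adj_pb w.adj_bq hqr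
        w.adj_rd had.symm w.compl_adj_ab w.compl_adj_aq w.compl_adj_ar hpq hpr w.compl_adj_pd
        w.compl_adj_br w.compl_adj_bd w.compl_adj_qd
    · exact hP.false_of_induced_path6 w.adj_ap w.adj_pb w.adj_bq hqr w.adj_rd
        w.compl_adj_ab w.compl_adj_aq w.compl_adj_ar ⟨w.ne_ad, had⟩ hpq hpr
        w.compl_adj_pd w.compl_adj_br w.compl_adj_bd w.compl_adj_qd
  · exact hP.false_of_induced_path6 w.adj_ap w.adj_pb w.adj_bq w.adj_qc w.adj_cr
      w.compl_adj_ab w.compl_adj_aq w.compl_adj_ac w.compl_adj_ar hpq w.compl_adj_pc hpr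
      w.compl_adj_bc w.compl_adj_br (compl_adj_of_not_adj w.adj_bq w.compl_adj_br hqr)

theorem compl_adj_ad (hH : _root_.Free G house) (hhole : HoleFree G) (hpq : G.Adj p q)
    (hqr : G.Adj q r) : Gᶜ.Adj a d := by
  refine ⟨w.ne_ad, fun had => ?_⟩
  by_cases hpr : G.Adj p r
  · exact hH.false_of_induced_house w.adj_ap hpr w.adj_rd had.symm hpq.symm hqr
      w.compl_adj_ar w.compl_adj_pd w.compl_adj_aq.symm w.compl_adj_qd
  · exact (hhole 5 (by norm_num)).false_of_induced_cycle5 w.adj_ap hpq hqr w.adj_rd had.symm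
      w.compl_adj_aq w.compl_adj_ar (compl_adj_of_not_adj w.adj_ap w.compl_adj_ar hpr)
      w.compl_adj_pd w.compl_adj_qd

theorem b_notMem {D : Set V} (hP : _root_.Free G (pathGraph 6)) (hD : IsEDS G D)
    (hpq : G.Adj p q) : b ∉ D := by
  intro hb
  obtain ⟨a', ha'D, ha'a⟩ := hD.exists_adj_of_notMem <|
    hD.notMem_of_adj_of_adj hb w.compl_adj_ab.ne.symm w.adj_pb.symm w.adj_ap.symm
  obtain ⟨c', hc'D, hc'c⟩ := hD.exists_adj_of_notMem <|
    hD.notMem_of_adj_of_adj hb w.compl_adj_bc.ne w.adj_bq w.adj_qc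
  have ha'b : a' ≠ b := G.ne_of_adj_of_not_adj ha'a w.compl_adj_ab.symm.2
  have hc'b : c' ≠ b := G.ne_of_adj_of_not_adj hc'c w.compl_adj_bc.2
  have ha'c' : a' ≠ c' := by
    rintro rfl
    exact (w.compl_adj_c_of_adj ha'a).2 hc'c
  exact hP.false_of_induced_path6 ha'a w.adj_ap hpq w.adj_qc hc'c.symm
    (hD.compl_adj_of_adj hb ha'D ha'b w.adj_pb.symm) (hD.compl_adj_of_adj hb ha'D ha'b w.adj_bq)
    (w.compl_adj_c_of_adj ha'a) (hD.compl_adj_of_ne hc'D ha'D ha'c')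
    w.compl_adj_aq w.compl_adj_ac (w.compl_adj_a_of_adj hc'c)
    w.compl_adj_pc (hD.compl_adj_of_adj hb hc'D hc'b w.adj_pb.symm).symm
    (hD.compl_adj_of_adj hb hc'D hc'b w.adj_bq).symm

theorem q_notMem {D : Set V} (hP : _root_.Free G (pathGraph 6)) (hH : _root_.Free G house)
    (hhole : HoleFree G) (hD : IsEDS G D) (hpq : G.Adj p q) (hqr : G.Adj q r) : q ∉ D := by
  intro hq
  obtain ⟨a', ha'D, ha'a⟩ := hD.exists_adj_of_notMem <|
    hD.notMem_of_adj_of_adj hq w.compl_adj_aq.ne.symm hpq.symm w.adj_ap.symm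
  obtain ⟨d', hd'D, hd'd⟩ := hD.exists_adj_of_notMem <|
    hD.notMem_of_adj_of_adj hq w.compl_adj_qd.ne hqr w.adj_rd
  have ha'q : a' ≠ q := G.ne_of_adj_of_not_adj ha'a w.compl_adj_aq.symm.2
  have hd'q : d' ≠ q := G.ne_of_adj_of_not_adj hd'd w.compl_adj_qd.2
  have ha'p := hD.compl_adj_of_adj hq ha'D ha'q hpq.symm
  have ha'r := hD.compl_adj_of_adj hq ha'D ha'q hqr
  have hd'p := hD.compl_adj_of_adj hq hd'D hd'q hpq.symm
  have hd'r := hD.compl_adj_of_adj hq hd'D hd'q hqr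
  have had := w.compl_adj_ad hH hhole hpq hqr
  by_cases hpr : G.Adj p r
  · rcases eq_or_ne a' d' with rfl | ha'd'
    · exact (hhole 5 (by norm_num)).false_of_induced_cycle5 ha'a w.adj_ap hpr w.adj_rd hd'd.symm
        ha'p ha'r w.compl_adj_ar had w.compl_adj_pd
    · exact hP.false_of_induced_path6 ha'a w.adj_ap hpr w.adj_rd hd'd.symm
        ha'p ha'r (hD.compl_adj_of_adj hd'D ha'D ha'd' hd'd) (hD.compl_adj_of_ne hd'D ha'D ha'd')
        w.compl_adj_ar had (hD.compl_adj_of_adj ha'D hd'D ha'd'.symm ha'a).symm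
        w.compl_adj_pd hd'p.symm hd'r.symm
  replace hpr := compl_adj_of_not_adj w.adj_ap w.compl_adj_ar hpr
  have ha'q' := hD.compl_adj_of_ne hq ha'D ha'q
  rcases eq_or_ne a' d' with rfl | ha'd'
  · exact (hhole 6 (by norm_num)).false_of_induced_cycle6 ha'a w.adj_ap hpq hqr w.adj_rd hd'd.symm
      ha'p ha'q' ha'r w.compl_adj_aq w.compl_adj_ar had hpr w.compl_adj_pd w.compl_adj_qd
  · exact hP.false_of_induced_path6 ha'a w.adj_ap hpq hqr w.adj_rd
      ha'p ha'q' ha'r (hD.compl_adj_of_adj hd'D ha'D ha'd' hd'd)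
      w.compl_adj_aq w.compl_adj_ar had hpr w.compl_adj_pd w.compl_adj_qd

end IsWindow

theorem isWindow_of_cycle {k : ℕ} {v x : ZMod k → V} (hk : 4 ≤ k) (hinj : Function.Injective v)
    (hnon : ∀ i j : ZMod k, j ≠ i - 1 → j ≠ i → j ≠ i + 1 → ¬ (square G).Adj (v i) (v j))
    (hd2 : ∀ i : ZMod k, G.dist (v i) (v (i + 1)) = 2)
    (hx : ∀ i : ZMod k, G.Adj (v i) (x i) ∧ G.Adj (x i) (v (i + 1))) (i : ZMod k) :
    IsWindow G (v i) (x i) (v (i + 1)) (x (i + 1)) (v (i + 2)) (x (i + 2)) (v (i + 3)) := by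
  have hm (m : ℕ) (h0 : 0 < m) (h4 : m < 4) : (m : ZMod k) ≠ 0 :=
    ZMod.natCast_ne_zero_of_lt h0 (by omega)
  have h1 : (1 : ZMod k) ≠ 0 := by exact_mod_cast hm 1 (by norm_num) (by norm_num)
  have h2 : (2 : ZMod k) ≠ 0 := by exact_mod_cast hm 2 (by norm_num) (by norm_num)
  have h3 : (3 : ZMod k) ≠ 0 := by exact_mod_cast hm 3 (by norm_num) (by norm_num)
  have hne : ∀ j, v j ≠ v (j + 2) := fun j h => h2 (add_eq_left.mp (hinj h).symm)
  have hfar : ∀ j, ¬(square G).Adj (v j) (v (j + 2)) := fun j =>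
    hnon j (j + 2) (fun h => h3 (by linear_combination h)) (add_ne_left.mpr h2)
      (fun h => h1 (by linear_combination h))
  have e2 : i + 1 + 1 = i + 2 := by ring
  have e3 : i + 2 + 1 = i + 3 := by ring
  have e3' : i + 1 + 2 = i + 3 := by ring
  exact
    { adj_ap := (hx i).1
      adj_pb := (hx i).2
      adj_bq := (hx (i + 1)).1
      adj_qc := e2 ▸ (hx (i + 1)).2
      adj_cr := (hx (i + 2)).1
      adj_rd := e3 ▸ (hx (i + 2)).2
      compl_adj_ab := compl_adj_of_dist_eq_two (hd2 i)
      compl_adj_bc := e2 ▸ compl_adj_of_dist_eq_two (hd2 (i + 1))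
      compl_adj_cd := e3 ▸ compl_adj_of_dist_eq_two (hd2 (i + 2))
      ne_ac := hne i
      not_square_adj_ac := hfar i
      ne_bd := e3' ▸ hne (i + 1)
      not_square_adj_bd := e3' ▸ hfar (i + 1)
      ne_ad := fun h => h3 (add_eq_left.mp (hinj h).symm) }

end

theorem stmt5_general (G : SimpleGraph V) (h6 : _root_.Free G (pathGraph 6)) (hH : _root_.Free G house)
    (hhole : HoleFree G)
    (D : Set V) (hED : IsEDS G D)
    (k : ℕ) (hk : 4 ≤ k) (v : ZMod k → V) (hinj : Function.Injective v)
    (hnon : ∀ i j : ZMod k, j ≠ i - 1 → j ≠ i → j ≠ i + 1 → ¬ (square G).Adj (v i) (v j))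
    (x : ZMod k → V) (hd2 : ∀ i : ZMod k, G.dist (v i) (v (i + 1)) = 2)
    (hx : ∀ i : ZMod k, G.Adj (v i) (x i) ∧ G.Adj (x i) (v (i + 1))) :
    ∀ i : ZMod k, v i ∉ D ∧ x i ∉ D := by
  intro i
  have w := isWindow_of_cycle hk hinj hnon hd2 hx (i - 1)
  rw [sub_add_cancel] at w
  have hpq := w.adj_pq h6 hH hhole
  have hqr := (w.reverse.adj_pq h6 hH hhole).symm
  exact ⟨w.b_notMem h6 hED hpq, w.q_notMem h6 hH hhole hED hpq hqr⟩

theorem stmt5 (G : SimpleGraph V) (h6 : _root_.Free G (pathGraph 6)) (hH : _root_.Free G house)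
    (hhole : HoleFree G) (hdom : _root_.Free G domino)
    (D : Set V) (hED : IsEDS G D)
    (k : ℕ) (hk : 4 ≤ k) (v : ZMod k → V) (hinj : Function.Injective v)
    (hadj : ∀ i : ZMod k, (square G).Adj (v i) (v (i + 1)))
    (hnon : ∀ i j : ZMod k, j ≠ i - 1 → j ≠ i → j ≠ i + 1 → ¬ (square G).Adj (v i) (v j))
    (x : ZMod k → V) (hd2 : ∀ i : ZMod k, G.dist (v i) (v (i + 1)) = 2)
    (hx : ∀ i : ZMod k, G.Adj (v i) (x i) ∧ G.Adj (x i) (v (i + 1))) :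
    ∀ i : ZMod k, v i ∉ D ∧ x i ∉ D :=
  stmt5_general G h6 hH hhole D hED k hk v hinj hnon x hd2 hx
end

section
/- Let G be a P₆-free graph and suppose G² contains an induced C_k with k ≥ 5 on vertices v₁,...,v_k. Then d_G(v_i, v_{i+1}) = 1 holds for at most one index i (mod k). -/
open SimpleGraph Finset

variable {V : Type*}

/-!
If two of the edges `vᵢvᵢ₊₁` were edges of `G`, they could not be consecutive, since then
`vᵢ` and `vᵢ₊₂` would be adjacent in `G²`. Otherwise, after a rotation, they are `u₀u₁` and
`uₙuₙ₊₁` with `3 ≤ n ≤ k - 2`. Let `A` consist of `u₁, …, uₙ₊₁` and the common neighbours of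
`uₜ, uₜ₊₁` for `1 ≤ t < n`. In `G[A]` the vertices `u₁` and `uₙ₊₁` are connected, and at distance
at least `4`: the only neighbour of `uₙ₊₁` in `A` is `uₙ`, and `d_G(u₁, uₙ) ≥ 3`. The first five
vertices of a shortest path from `u₁`, preceded by `u₀`, whose only neighbour in `A` is `u₁`,
form an induced `P₆`.
-/

namespace SimpleGraph

variable {W : Type*} {G : SimpleGraph V}

lemma Walk.dist_getVert_of_length_eq_dist {a b : V} (p : G.Walk a b)
    (hp : p.length = G.dist a b) {i : ℕ} (hi : i ≤ p.length) :
    G.dist a (p.getVert i) = i := by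
  have := length_eq_dist_of_subwalk hp (p.isSubwalk_take i)
  rwa [Walk.take_length, min_eq_left hi, eq_comm] at this

lemma Walk.exists_pathGraph_embedding {a b : V} (p : G.Walk a b)
    (hp : p.length = G.dist a b) {m : ℕ} (hm : m ≤ p.length) :
    ∃ f : pathGraph (m + 1) ↪g G, f 0 = a := by
  have hdist (i : Fin (m + 1)) : G.dist a (p.getVert i) = i :=
    p.dist_getVert_of_length_eq_dist hp (by omega)
  have hinj : Function.Injective fun i : Fin (m + 1) => p.getVert i := by
    intro i j hij
    exact Fin.ext ((hdist i).symm.trans ((congrArg (G.dist a) hij).trans (hdist j)))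
  refine ⟨⟨⟨fun i => p.getVert i, hinj⟩, fun {i j} => ?_⟩, p.getVert_zero⟩
  simp only [Function.Embedding.coeFn_mk, pathGraph_adj]
  constructor
  · intro hadj
    have hne : (i : ℕ) ≠ j := fun h => hadj.ne (congrArg _ h)
    have := hadj.diff_dist_adj (u := a)
    rw [hdist, hdist] at this
    omega
  · rintro (h | h)
    · rw [← h]; exact p.adj_getVert_succ (by omega)
    · rw [← h]; exact (p.adj_getVert_succ (by omega)).symm

lemma Embedding.exists_pathGraph_cons {m : ℕ} (f : pathGraph (m + 1) ↪g G) {w : V}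
    (hw : w ∉ Set.range f) (hadj : ∀ i, G.Adj w (f i) ↔ i = 0) :
    Nonempty (pathGraph (m + 2) ↪g G) := by
  let g : Fin (m + 2) → V := Fin.cons w f
  have hinj : Function.Injective g := by
    intro i j hij
    cases i using Fin.cases <;> cases j using Fin.cases
    · rfl
    · exact (hw ⟨_, hij.symm⟩).elim
    · exact (hw ⟨_, hij⟩).elim
    · simpa [g] using hij
  refine ⟨⟨⟨g, hinj⟩, fun {i j} => ?_⟩⟩
  cases i using Fin.cases <;> cases j using Fin.cases
  · simp [g]
  · simp only [g, Function.Embedding.coeFn_mk, Fin.cons_zero, Fin.cons_succ, pathGraph_adj,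
      hadj, Fin.ext_iff, Fin.val_zero, Fin.val_succ]
    omega
  · simp only [g, Function.Embedding.coeFn_mk, Fin.cons_zero, Fin.cons_succ, pathGraph_adj,
      G.adj_comm _ w, hadj, Fin.ext_iff, Fin.val_zero, Fin.val_succ]
    omega
  · simp [g, pathGraph_adj]

lemma dist_induce_lt_of_free {m : ℕ} (hG : _root_.Free G (pathGraph (m + 2))) {S : Set V}
    {w : V} (hw : w ∉ S) {a b : S} (hadj : ∀ x : S, G.Adj w x ↔ x = a)
    (hr : (G.induce S).Reachable a b) : (G.induce S).dist a b < m := by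
  by_contra! hm
  obtain ⟨p, hp⟩ := hr.exists_walk_length_eq_dist
  obtain ⟨f, hf⟩ := p.exists_pathGraph_embedding hp (hp ▸ hm)
  refine hG.false
    (Embedding.exists_pathGraph_cons ((Embedding.induce S).comp f) (w := w) ?_ ?_).some
  · rintro ⟨i, hi⟩
    exact hw (hi ▸ (f i).2)
  · intro i
    change G.Adj w (f i) ↔ i = 0
    rw [hadj, ← hf, f.injective.eq_iff]

lemma Reachable.dist_map_le {H : SimpleGraph W} {a b : W} (hr : H.Reachable a b) (f : H →g G) :
    G.dist (f a) (f b) ≤ H.dist a b := by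
  obtain ⟨p, hp⟩ := hr.exists_walk_length_eq_dist
  simpa [hp] using dist_le (p.map f)

lemma Reachable.add_one_le_dist_of_forall_adj {a b : V} (hr : G.Reachable a b) (hne : a ≠ b)
    {m : ℕ} (h : ∀ y, G.Adj y b → m ≤ G.dist a y) : m + 1 ≤ G.dist a b := by
  obtain ⟨p, hp⟩ := hr.exists_walk_length_eq_dist
  have hnil : ¬ p.Nil := fun h => hne h.eq
  have := dist_le p.dropLast
  have := p.length_dropLast_add_one hnil
  have := h _ (p.adj_penultimate hnil)
  omega

end SimpleGraph

lemma square_adj_of_adj {G : SimpleGraph V} {a b : V} (h : G.Adj a b) : (square G).Adj a b :=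
  ⟨h.ne, Or.inl h⟩

lemma square_adj_of_adj_of_adj {G : SimpleGraph V} {a b c : V} (hne : a ≠ c) (hab : G.Adj a b)
    (hbc : G.Adj b c) : (square G).Adj a c :=
  ⟨hne, Or.inr ⟨b, hab, hbc⟩⟩

lemma three_le_dist_of_not_square_adj {G : SimpleGraph V} {a b : V} (hr : G.Reachable a b)
    (hne : a ≠ b) (h : ¬ (square G).Adj a b) : 3 ≤ G.dist a b := by
  have := (two_lt_edist_iff (G := G)).2 ⟨hne, fun hab => h (square_adj_of_adj hab),
    Set.eq_empty_of_forall_notMem fun x hx => h (square_adj_of_adj_of_adj hne hx.1 hx.2.symm)⟩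
  rw [← hr.coe_dist_eq_edist] at this
  exact_mod_cast this

/-- `u t` stands for `v_(t mod k)`: the cycle is listed `k`-periodically, so that indices are
natural numbers. -/
structure IsInducedCycleInSquare (G : SimpleGraph V) (k : ℕ) (u : ℕ → V) : Prop where
  periodic : Function.Periodic u k
  ne_of_lt : ∀ s t, s < t → t < s + k → u s ≠ u t
  adj_succ : ∀ t, (square G).Adj (u t) (u (t + 1))
  not_adj : ∀ s t, s + 2 ≤ t → t + 2 ≤ s + k → ¬ (square G).Adj (u s) (u t)

/-- The midpoints stop before `u n`, so that `u n` is the only neighbour of `u (n + 1)`. -/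
def arcWithMidpoints (G : SimpleGraph V) (u : ℕ → V) (n : ℕ) : Set V :=
  {x | (∃ t, 1 ≤ t ∧ t ≤ n + 1 ∧ x = u t) ∨
    ∃ t, 1 ≤ t ∧ t < n ∧ G.Adj (u t) x ∧ G.Adj x (u (t + 1))}

lemma mem_arcWithMidpoints {G : SimpleGraph V} {u : ℕ → V} {n t : ℕ} (h1 : 1 ≤ t)
    (h2 : t ≤ n + 1) : u t ∈ arcWithMidpoints G u n :=
  Or.inl ⟨t, h1, h2, rfl⟩

namespace IsInducedCycleInSquare

variable {G : SimpleGraph V} {k n : ℕ} {u : ℕ → V}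

lemma shift (hu : IsInducedCycleInSquare G k u) (m : ℕ) :
    IsInducedCycleInSquare G k (fun t => u (t + m)) where
  periodic t := by simpa only [add_right_comm t k m] using hu.periodic (t + m)
  ne_of_lt s t h1 h2 := hu.ne_of_lt _ _ (by omega) (by omega)
  adj_succ t := by simpa only [add_right_comm t 1 m] using hu.adj_succ (t + m)
  not_adj s t h1 h2 := hu.not_adj _ _ (by omega) (by omega)

lemma not_adj_adj (hu : IsInducedCycleInSquare G k u) (hk : 4 ≤ k) {t : ℕ}
    (h : G.Adj (u t) (u (t + 1))) : ¬ G.Adj (u (t + 1)) (u (t + 2)) := fun h' =>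
  hu.not_adj t (t + 2) le_rfl (by omega)
    (square_adj_of_adj_of_adj (hu.ne_of_lt _ _ (by omega) (by omega)) h h')

lemma notMem_arcWithMidpoints (hu : IsInducedCycleInSquare G k u) (hn : n + 2 ≤ k) :
    u 0 ∉ arcWithMidpoints G u n := by
  rintro (⟨t, h1, h2, he⟩ | ⟨t, h1, h2, -, hx⟩)
  · exact hu.ne_of_lt 0 t (by omega) (by omega) he
  · exact hu.not_adj 0 (t + 1) (by omega) (by omega) (square_adj_of_adj hx)

lemma eq_of_adj_zero (hu : IsInducedCycleInSquare G k u) (h3 : 3 ≤ n) (hn : n + 2 ≤ k)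
    (hlast : G.Adj (u n) (u (n + 1))) {x : V} (hx : x ∈ arcWithMidpoints G u n)
    (h : G.Adj (u 0) x) : x = u 1 := by
  rcases hx with ⟨t, h1, h2, rfl⟩ | ⟨t, h1, h2, -, hxt⟩
  · rcases (by omega : t = 1 ∨ 2 ≤ t ∧ t + 2 ≤ k ∨ t = n + 1 ∧ n + 2 = k) with
      rfl | ht | ⟨rfl, hk⟩
    · rfl
    · exact (hu.not_adj 0 t (by omega) (by omega) (square_adj_of_adj h)).elim
    · refine (hu.not_adj_adj (by omega) hlast ?_).elim
      rw [show n + 2 = 0 + k by omega, hu.periodic]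
      exact h.symm
  · exact (hu.not_adj 0 (t + 1) (by omega) (by omega) (square_adj_of_adj_of_adj
      (hu.ne_of_lt 0 (t + 1) (by omega) (by omega)) h hxt)).elim

lemma eq_of_adj_last (hu : IsInducedCycleInSquare G k u) (hn : n + 2 ≤ k) {x : V}
    (hx : x ∈ arcWithMidpoints G u n) (h : G.Adj x (u (n + 1))) : x = u n := by
  rcases hx with ⟨t, h1, h2, rfl⟩ | ⟨t, h1, h2, hxt, -⟩
  · rcases (by omega : t + 2 ≤ n + 1 ∨ t = n ∨ t = n + 1) with ht | rfl | rfl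
    · exact (hu.not_adj t (n + 1) ht (by omega) (square_adj_of_adj h)).elim
    · rfl
    · exact (h.ne rfl).elim
  · exact (hu.not_adj t (n + 1) (by omega) (by omega) (square_adj_of_adj_of_adj
      (hu.ne_of_lt _ _ (by omega) (by omega)) hxt h)).elim

lemma reachable_arcWithMidpoints (hu : IsInducedCycleInSquare G k u)
    (hlast : G.Adj (u n) (u (n + 1))) {t : ℕ} (h1 : 1 ≤ t) (h2 : t ≤ n + 1) :
    (G.induce (arcWithMidpoints G u n)).Reachable
      ⟨u 1, mem_arcWithMidpoints le_rfl le_add_self⟩ ⟨u t, mem_arcWithMidpoints h1 h2⟩ := by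
  induction t, h1 using Nat.le_induction with
  | base => rfl
  | succ t ht ih =>
    refine (ih (by omega)).trans ?_
    rcases (by omega : t = n ∨ t < n) with rfl | htn
    · exact Adj.reachable hlast
    · obtain ⟨-, hadj | ⟨x, hx1, hx2⟩⟩ := hu.adj_succ t
      · exact Adj.reachable hadj
      · have hx : x ∈ arcWithMidpoints G u n := Or.inr ⟨t, ht, htn, hx1, hx2⟩
        have hx1 : (G.induce _).Adj ⟨u t, mem_arcWithMidpoints ht (by omega)⟩ ⟨x, hx⟩ := hx1
        have hx2 : (G.induce _).Adj ⟨x, hx⟩ ⟨u (t + 1), mem_arcWithMidpoints (by omega) h2⟩ :=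
          hx2
        exact hx1.reachable.trans hx2.reachable

lemma four_le_dist_arcWithMidpoints (hu : IsInducedCycleInSquare G k u) (h3 : 3 ≤ n)
    (hn : n + 2 ≤ k) (hlast : G.Adj (u n) (u (n + 1))) :
    4 ≤ (G.induce (arcWithMidpoints G u n)).dist
      ⟨u 1, mem_arcWithMidpoints le_rfl le_add_self⟩
      ⟨u (n + 1), mem_arcWithMidpoints le_add_self le_rfl⟩ := by
  refine (hu.reachable_arcWithMidpoints hlast le_add_self le_rfl).add_one_le_dist_of_forall_adj
    (fun h => hu.ne_of_lt 1 (n + 1) (by omega) (by omega) (congrArg Subtype.val h))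
    fun y hy => ?_
  obtain rfl : y = ⟨u n, mem_arcWithMidpoints (by omega) (by omega)⟩ :=
    Subtype.ext (hu.eq_of_adj_last hn y.2 hy)
  have hr := hu.reachable_arcWithMidpoints hlast (t := n) (by omega) (by omega)
  calc 3 ≤ G.dist (u 1) (u n) :=
        three_le_dist_of_not_square_adj (hr.map (Embedding.induce _).toHom)
          (hu.ne_of_lt 1 n (by omega) (by omega)) (hu.not_adj 1 n (by omega) (by omega))
    _ ≤ _ := hr.dist_map_le (Embedding.induce _).toHom

lemma false_of_adj_of_adj (hu : IsInducedCycleInSquare G k u)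
    (hG : _root_.Free G (pathGraph 6)) (h3 : 3 ≤ n) (hn : n + 2 ≤ k)
    (h0 : G.Adj (u 0) (u 1)) (hlast : G.Adj (u n) (u (n + 1))) : False := by
  have hlt := dist_induce_lt_of_free (m := 4) hG (hu.notMem_arcWithMidpoints hn)
    (fun x => ⟨fun h => Subtype.ext (hu.eq_of_adj_zero h3 hn hlast x.2 h),
      by rintro rfl; exact h0⟩)
    (hu.reachable_arcWithMidpoints hlast le_add_self le_rfl)
  have := hu.four_le_dist_arcWithMidpoints h3 hn hlast
  omega

theorem eq_zero_of_adj_of_adj (hu : IsInducedCycleInSquare G k u)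
    (hG : _root_.Free G (pathGraph 6)) (hk : 5 ≤ k) {d : ℕ} (hd : d < k)
    (h0 : G.Adj (u 0) (u 1)) (hd' : G.Adj (u d) (u (d + 1))) : d = 0 := by
  by_contra hne
  rcases (by omega : d = 1 ∨ d = 2 ∨ 3 ≤ d ∧ d + 2 ≤ k ∨ d + 1 = k) with
    rfl | rfl | ⟨h3, h⟩ | hdk
  · exact hu.not_adj_adj (by omega) h0 hd'
  · -- the gap the other way round is `k - 2 ≥ 3`
    refine (hu.shift 2).false_of_adj_of_adj hG (n := k - 2) (by omega) (by omega) hd' ?_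
    show G.Adj (u (k - 2 + 2)) (u (k - 2 + 1 + 2))
    rw [show k - 2 + 2 = 0 + k by omega, show k - 2 + 1 + 2 = 1 + k by omega, hu.periodic,
      hu.periodic]
    exact h0
  · exact hu.false_of_adj_of_adj hG h3 h h0 hd'
  · refine hu.not_adj_adj (by omega) hd' ?_
    rw [show d + 1 = 0 + k by omega, show d + 2 = 1 + k by omega, hu.periodic, hu.periodic]
    exact h0

end IsInducedCycleInSquare

lemma ZMod.natCast_ne_zero_of_pos_of_lt {k a : ℕ} (h0 : 0 < a) (h : a < k) :
    (a : ZMod k) ≠ 0 := by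
  rw [Ne, ZMod.natCast_eq_zero_iff]
  exact Nat.not_dvd_of_pos_of_lt h0 h

lemma isInducedCycleInSquare_of_zmod {G : SimpleGraph V} {k : ℕ} {v : ZMod k → V}
    (hinj : Function.Injective v) (hadj : ∀ i : ZMod k, (square G).Adj (v i) (v (i + 1)))
    (hnon : ∀ i j : ZMod k, j ≠ i - 1 → j ≠ i → j ≠ i + 1 → ¬ (square G).Adj (v i) (v j))
    (i : ZMod k) : IsInducedCycleInSquare G k (fun t : ℕ => v (i + t)) where
  periodic t := by simp only [Nat.cast_add, ZMod.natCast_self, add_zero]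
  ne_of_lt s t h1 h2 h := by
    obtain ⟨e, rfl⟩ := Nat.exists_eq_add_of_lt h1
    refine ZMod.natCast_ne_zero_of_pos_of_lt (k := k) (a := e + 1) (by omega) (by omega) ?_
    have := hinj h
    push_cast at this ⊢
    linear_combination -this
  adj_succ t := by simpa only [Nat.cast_add, Nat.cast_one, add_assoc] using hadj (i + t)
  not_adj s t h1 h2 := by
    obtain ⟨e, rfl⟩ := Nat.exists_eq_add_of_le h1
    refine hnon _ _ (fun h => ?_) (fun h => ?_) (fun h => ?_)
    · refine ZMod.natCast_ne_zero_of_pos_of_lt (k := k) (a := e + 3) (by omega) (by omega) ?_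
      push_cast at h ⊢
      linear_combination h
    · refine ZMod.natCast_ne_zero_of_pos_of_lt (k := k) (a := e + 2) (by omega) (by omega) ?_
      push_cast at h ⊢
      linear_combination h
    · refine ZMod.natCast_ne_zero_of_pos_of_lt (k := k) (a := e + 1) (by omega) (by omega) ?_
      push_cast at h ⊢
      linear_combination h

theorem stmt10 (G : SimpleGraph V) (h6 : _root_.Free G (pathGraph 6))
    (k : ℕ) (hk : 5 ≤ k) (v : ZMod k → V) (hinj : Function.Injective v)
    (hadj : ∀ i : ZMod k, (square G).Adj (v i) (v (i + 1)))
    (hnon : ∀ i j : ZMod k, j ≠ i - 1 → j ≠ i → j ≠ i + 1 → ¬ (square G).Adj (v i) (v j)) :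
    ∀ i j : ZMod k, G.Adj (v i) (v (i + 1)) → G.Adj (v j) (v (j + 1)) → i = j := by
  intro i j hi hj
  have : NeZero k := ⟨by omega⟩
  have hji : i + ((j - i).val : ZMod k) = j := by rw [ZMod.natCast_zmod_val]; ring
  have hval : (j - i).val = 0 :=
    (isInducedCycleInSquare_of_zmod hinj hadj hnon i).eq_zero_of_adj_of_adj h6 hk
      (ZMod.val_lt _) (by simpa using hi) (by simpa [← add_assoc, hji] using hj)
  rw [ZMod.val_eq_zero, sub_eq_zero] at hval
  exact hval.symm
end

section
/- Let G be a P₆-free graph with an induced C_k (k ≥ 5) in G² on real vertices v₁,...,v_k with auxiliary vertices x_i (common G-neighbors of v_i, v_{i+1} when d_G(v_i,v_{i+1})=2). If x_i and x_j are nonadjacent in G with j ∉ {i−1, i+1}, then v_{i+1}v_j ∉ E(G), v_{j+1}v_i ∉ E(G), and x_i, x_j have a common auxiliary neighbor x_r with r strictly between i and j on one arc of the cycle, and a common auxiliary neighbor x_s on the other arc. -/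
/-! Write `j = i + d` with `2 ≤ d ≤ k - 2`. Take a shortest walk from `x i` to `x j` whose inner
vertices lie on the arc strictly between them (real vertices `v (i + c)`, `0 < c ≤ d`, and
auxiliary ones `x (i + c)`, `0 < c < d`). It is chordless, and `v i`, `v (j + 1)` are adjacent
only to its first and its last vertex respectively; so if `v i v (j + 1) ∉ E(G)`, extending it by
these two vertices gives a chordless walk, of length at most 4 since `G` is `P₆`-free. Hence the
shortest walk has length 2, and its middle vertex is a common neighbour of `x i` and `x j`, which
no real vertex of the arc is.

An edge `v (i + 1) v j` is excluded by the induced cycle in `G²` when `d ≥ 3`, and for `d = 2` it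
would give such a walk `x i, v (i + 1), v (i + 2), x j` through real vertices only. This gives the
first two conclusions; then the middle vertex above is some `x r` on the arc, and swapping `i`
and `j` gives the other arc. -/

open SimpleGraph Finset

variable {V : Type*}

structure IsChordlessWalk (G : SimpleGraph V) (p : ℕ → V) (n : ℕ) : Prop where
  adj : ∀ a < n, G.Adj (p a) (p (a + 1))
  not_adj : ∀ a b, a + 2 ≤ b → b ≤ n → ¬ G.Adj (p a) (p b)

namespace IsChordlessWalk

variable {G : SimpleGraph V} {p : ℕ → V} {n : ℕ}

theorem mono (hp : IsChordlessWalk G p n) {m : ℕ} (hmn : m ≤ n) : IsChordlessWalk G p m :=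
  ⟨fun a ha => hp.adj a (by omega), fun a b hab hb => hp.not_adj a b hab (by omega)⟩

theorem cons (hp : IsChordlessWalk G p n) {u : V} (hu : G.Adj u (p 0))
    (hu' : ∀ a, 0 < a → a ≤ n → ¬ G.Adj u (p a)) :
    IsChordlessWalk G (fun c => if c = 0 then u else p (c - 1)) (n + 1) := by
  refine ⟨fun a ha => ?_, fun a b hab hb => ?_⟩
  · cases a with
    | zero => simpa using hu
    | succ a => simpa using hp.adj a (by omega)
  · obtain ⟨b, rfl⟩ : ∃ b', b = b' + 1 := ⟨b - 1, by omega⟩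
    cases a with
    | zero => simpa using hu' b (by omega) (by omega)
    | succ a => simpa using hp.not_adj a b (by omega) (by omega)

theorem snoc (hp : IsChordlessWalk G p n) {w : V} (hw : G.Adj (p n) w)
    (hw' : ∀ a < n, ¬ G.Adj (p a) w) :
    IsChordlessWalk G (fun c => if c ≤ n then p c else w) (n + 1) := by
  refine ⟨fun a ha => ?_, fun a b hab hb => ?_⟩
  · rcases Nat.lt_or_ge a n with han | han
    · simpa [han.le, show a + 1 ≤ n by omega] using hp.adj a han
    · simpa [show a = n by omega] using hw
  · rcases Nat.lt_or_ge n b with hnb | hnb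
    · simpa [show a ≤ n by omega, hnb.not_ge] using hw' a (by omega)
    · simpa [show a ≤ n by omega, hnb] using hp.not_adj a b hab hnb

theorem not_five (h6 : _root_.Free G (pathGraph 6)) (hp : IsChordlessWalk G p 5) : False := by
  have hadj : ∀ a b : Fin 6, G.Adj (p a) (p b) ↔ (pathGraph 6).Adj a b := by
    intro a b
    rw [pathGraph_adj]
    constructor
    · intro h
      by_contra hab
      rcases lt_trichotomy (a : ℕ) b with hlt | heq | hgt
      · exact hp.not_adj a b (by omega) (by omega) h
      · exact G.loopless.irrefl _ (heq ▸ h)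
      · exact hp.not_adj b a (by omega) (by omega) h.symm
    · rintro (h | h)
      · simpa [← h] using hp.adj a (by omega)
      · simpa [← h] using (hp.adj b (by omega)).symm
  have hnbr : ∀ a b : Fin 6, (∀ c, (pathGraph 6).Adj c a ↔ (pathGraph 6).Adj c b) → a = b := by
    simp only [pathGraph_adj]
    decide
  refine h6.false ⟨⟨fun a => p a, fun a b hab => hnbr a b fun c => ?_⟩, hadj _ _⟩
  rw [← hadj, ← hadj]
  exact iff_of_eq (congrArg _ hab)

theorem le_four (h6 : _root_.Free G (pathGraph 6)) (hp : IsChordlessWalk G p n) : n ≤ 4 := by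
  by_contra h
  exact not_five h6 (hp.mono (by omega))

end IsChordlessWalk

def ReachableThrough (G : SimpleGraph V) (A : Set V) (u w : V) (n : ℕ) : Prop :=
  ∃ p : ℕ → V, p 0 = u ∧ p n = w ∧ (∀ a < n, G.Adj (p a) (p (a + 1))) ∧
    ∀ a, 0 < a → a < n → p a ∈ A

namespace ReachableThrough

variable {G : SimpleGraph V} {A : Set V} {u w w' : V} {n : ℕ}

theorem single (h : G.Adj u w) : ReachableThrough G A u w 1 :=
  ⟨fun c => if c = 0 then u else w, rfl, rfl, fun a ha => by simpa [show a = 0 by omega] using h,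
    fun a ha ha' => by omega⟩

theorem snoc (h : ReachableThrough G A u w n) (hw : w ∈ A) (hww' : G.Adj w w') :
    ReachableThrough G A u w' (n + 1) := by
  obtain ⟨p, hp0, hpn, hadj, hA⟩ := h
  refine ⟨fun c => if c ≤ n then p c else w', by simpa using hp0, by simp, fun a ha => ?_,
    fun a ha ha' => ?_⟩
  · rcases Nat.lt_or_ge a n with han | han
    · simpa [han.le, show a + 1 ≤ n by omega] using hadj a han
    · simpa [show a = n by omega, hpn] using hww'
  · rcases Nat.lt_or_ge a n with han | han
    · simpa [han.le] using hA a ha han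
    · simpa [show a = n by omega, hpn] using hw

theorem of_chord {p : ℕ → V} (hp0 : p 0 = u) (hpn : p n = w)
    (hadj : ∀ a < n, G.Adj (p a) (p (a + 1))) (hA : ∀ a, 0 < a → a < n → p a ∈ A)
    {a b : ℕ} (hab : a + 2 ≤ b) (hb : b ≤ n) (hchord : G.Adj (p a) (p b)) :
    ReachableThrough G A u w (n - (b - a - 1)) := by
  refine ⟨fun c => if c ≤ a then p c else p (c + (b - a - 1)), by simpa using hp0,
    by simpa [show ¬ n - (b - a - 1) ≤ a by omega, show n - (b - a - 1) + (b - a - 1) = n by omega]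
      using hpn, fun c hc => ?_, fun c hc hc' => ?_⟩
  · rcases lt_trichotomy c a with hca | rfl | hca
    · simpa [hca.le, show c + 1 ≤ a by omega] using hadj c (by omega)
    · simpa [show c + 1 + (b - c - 1) = b by omega] using hchord
    · simpa [show ¬ c ≤ a by omega, show ¬ c < a by omega,
        show c + 1 + (b - a - 1) = c + (b - a - 1) + 1 by omega]
        using hadj (c + (b - a - 1)) (by omega)
  · by_cases hca : c ≤ a
    · simpa [hca] using hA c hc (by omega)
    · simpa [hca] using hA (c + (b - a - 1)) (by omega) (by omega)

theorem exists_isChordlessWalk (h : ReachableThrough G A u w n) :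
    ∃ m p, p 0 = u ∧ p m = w ∧ (∀ a, 0 < a → a < m → p a ∈ A) ∧ IsChordlessWalk G p m := by
  classical
  have hex : ∃ m, ReachableThrough G A u w m := ⟨n, h⟩
  obtain ⟨p, hp0, hpm, hadj, hA⟩ := Nat.find_spec hex
  refine ⟨Nat.find hex, p, hp0, hpm, hA, hadj, fun a b hab hb hchord => ?_⟩
  exact Nat.find_min hex (by omega) (of_chord hp0 hpm hadj hA hab hb hchord)

end ReachableThrough

theorem ne_of_sub_eq_intCast {k : ℕ} {s t : ZMod k} (a : ℤ) (h : t - s = a)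
    (ha : a ≠ 0 ∧ -(k : ℤ) < a ∧ a < k) : s ≠ t := by
  rintro rfl
  rw [sub_self, eq_comm, ZMod.intCast_zmod_eq_zero_iff_dvd] at h
  exact ha.1 (Int.eq_zero_of_abs_lt_dvd h (abs_lt.2 ha.2))

theorem two_le_val_sub {k : ℕ} [NeZero k] {i j : ZMod k} (h1 : j ≠ i - 1) (h2 : j ≠ i)
    (h3 : j ≠ i + 1) : 2 ≤ (j - i).val ∧ (j - i).val + 2 ≤ k := by
  have hlt := ZMod.val_lt (j - i)
  have hcast : (((j - i).val : ℕ) : ZMod k) = j - i := ZMod.natCast_zmod_val _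
  rcases (by omega : (j - i).val = 0 ∨ (j - i).val = 1 ∨ (j - i).val + 1 = k ∨
      2 ≤ (j - i).val ∧ (j - i).val + 2 ≤ k) with h | h | h | h
  · exact absurd (sub_eq_zero.1 ((ZMod.val_eq_zero _).1 h)) h2
  · rw [h, Nat.cast_one] at hcast
    exact absurd (by linear_combination -hcast) h3
  · have : (((j - i).val + 1 : ℕ) : ZMod k) = 0 := by rw [h, ZMod.natCast_self]
    push_cast at this
    exact absurd (by linear_combination this - hcast) h1
  · exact h

/-- `v` is an induced `k`-cycle of `square G`; `S` is the set of `i` with `d_G(v i, v (i + 1)) = 2`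
and `x i` is then the auxiliary vertex. -/
structure IsCycleEmbedding (G : SimpleGraph V) (k : ℕ) (v : ZMod k → V) (S : Set (ZMod k))
    (x : ZMod k → V) : Prop where
  five_le : 5 ≤ k
  injective : Function.Injective v
  not_square_adj : ∀ i j : ZMod k, j ≠ i - 1 → j ≠ i → j ≠ i + 1 → ¬ (square G).Adj (v i) (v j)
  not_adj_of_mem : ∀ i ∈ S, ¬ G.Adj (v i) (v (i + 1))
  adj_aux_left : ∀ i ∈ S, G.Adj (v i) (x i)
  adj_aux_right : ∀ i ∈ S, G.Adj (x i) (v (i + 1))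
  adj_of_notMem : ∀ i ∉ S, G.Adj (v i) (v (i + 1))

def arc {k : ℕ} (v x : ZMod k → V) (S : Set (ZMod k)) (i : ZMod k) (d : ℕ) : Set V :=
  {u | ∃ c : ℕ, 1 ≤ c ∧ c ≤ d ∧ u = v (i + c)} ∪
    {u | ∃ c : ℕ, 1 ≤ c ∧ c < d ∧ i + c ∈ S ∧ u = x (i + c)}

namespace IsCycleEmbedding

variable {G : SimpleGraph V} {k : ℕ} {v x : ZMod k → V} {S : Set (ZMod k)}

theorem not_adj_v_v (C : IsCycleEmbedding G k v S x) {s t : ZMod k} (a : ℤ) (hst : t - s = a)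
    (ha : 2 ≤ a ∧ a + 2 ≤ k) : ¬ G.Adj (v s) (v t) := fun h =>
  C.not_square_adj s t
    (ne_of_sub_eq_intCast (-a - 1) (by push_cast; linear_combination -hst) (by omega))
    (ne_of_sub_eq_intCast (-a) (by push_cast; linear_combination -hst) (by omega))
    (ne_of_sub_eq_intCast (1 - a) (by push_cast; linear_combination -hst) (by omega))
    ⟨h.ne, Or.inl h⟩

theorem not_adj_x_v (C : IsCycleEmbedding G k v S x) {s t : ZMod k} (hs : s ∈ S) (a : ℤ)
    (hst : t - s = a) (ha : 2 - (k : ℤ) ≤ a ∧ a < k ∧ a ≠ 0 ∧ a ≠ 1) : ¬ G.Adj (x s) (v t) := by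
  intro h
  have hk := C.five_le
  have hts : t ≠ s := ne_of_sub_eq_intCast (-a) (by push_cast; linear_combination -hst) (by omega)
  by_cases hts' : t = s - 1
  · subst hts'
    exact C.not_square_adj (s + 1) (s - 1)
      (ne_of_sub_eq_intCast 1 (by push_cast; ring) (by omega))
      (ne_of_sub_eq_intCast 2 (by push_cast; ring) (by omega))
      (ne_of_sub_eq_intCast 3 (by push_cast; ring) (by omega))
      ⟨C.injective.ne (ne_of_sub_eq_intCast (-2) (by push_cast; ring) (by omega)),
        Or.inr ⟨x s, (C.adj_aux_right s hs).symm, h⟩⟩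
  · exact C.not_square_adj s t hts' hts
      (ne_of_sub_eq_intCast (1 - a) (by push_cast; linear_combination -hst) (by omega))
      ⟨C.injective.ne hts.symm, Or.inr ⟨x s, C.adj_aux_left s hs, h⟩⟩

theorem reachableThrough_arc (C : IsCycleEmbedding G k v S x) {i : ZMod k} {d : ℕ} (hi : i ∈ S)
    (hj : i + d ∈ S) (hd : 1 ≤ d) :
    ∃ n, ReachableThrough G (arc v x S i d) (x i) (x (i + d)) n := by
  have hv : ∀ c : ℕ, 1 ≤ c → c ≤ d → v (i + c) ∈ arc v x S i d := fun c h1 h2 =>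
    Or.inl ⟨c, h1, h2, rfl⟩
  have hreach : ∀ c : ℕ, 1 ≤ c → c ≤ d →
      ∃ n, ReachableThrough G (arc v x S i d) (x i) (v (i + c)) n := by
    intro c hc
    induction c, hc using Nat.le_induction with
    | base => exact fun _ => ⟨1, .single (by simpa using C.adj_aux_right i hi)⟩
    | succ c hc ih =>
      intro hcd
      obtain ⟨n, hn⟩ := ih (by omega)
      have hvc := hv c hc (by omega)
      rw [Nat.cast_succ, ← add_assoc]
      by_cases hcS : i + c ∈ S
      · exact ⟨n + 2, (hn.snoc hvc (C.adj_aux_left _ hcS)).snoc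
          (Or.inr ⟨c, hc, by omega, hcS, rfl⟩) (C.adj_aux_right _ hcS)⟩
      · exact ⟨n + 1, hn.snoc hvc (C.adj_of_notMem _ hcS)⟩
  obtain ⟨n, hn⟩ := hreach d hd le_rfl
  exact ⟨n + 1, hn.snoc (hv d hd le_rfl) (C.adj_aux_left _ hj)⟩

theorem not_adj_v_arc (C : IsCycleEmbedding G k v S x) {i : ZMod k} {d : ℕ} (hi : i ∈ S)
    (hdk : d + 2 ≤ k) {u : V} (hu : u ∈ arc v x S i d) : ¬ G.Adj (v i) u := by
  rcases hu with ⟨c, hc1, hcd, rfl⟩ | ⟨c, hc1, hcd, hcS, rfl⟩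
  · obtain rfl | hc2 := eq_or_lt_of_le hc1
    · simpa using C.not_adj_of_mem i hi
    · exact C.not_adj_v_v c (by simp) (by omega)
  · exact fun h => C.not_adj_x_v hcS (-c) (by push_cast; ring) (by omega) h.symm

theorem not_adj_arc_v (C : IsCycleEmbedding G k v S x) {i : ZMod k} {d : ℕ} (hj : i + d ∈ S)
    (hdk : d + 2 ≤ k) {u : V} (hu : u ∈ arc v x S i d) : ¬ G.Adj u (v (i + d + 1)) := by
  rcases hu with ⟨c, hc1, hcd, rfl⟩ | ⟨c, hc1, hcd, hcS, rfl⟩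
  · obtain rfl | hcd := eq_or_lt_of_le hcd
    · exact C.not_adj_of_mem _ hj
    · exact C.not_adj_v_v (d + 1 - c) (by push_cast; ring) (by omega)
  · exact C.not_adj_x_v hcS (d + 1 - c) (by push_cast; ring) (by omega)

theorem not_adj_x_v_and_adj_v_x (C : IsCycleEmbedding G k v S x) {i : ZMod k} {d c : ℕ}
    (hi : i ∈ S) (hj : i + d ∈ S) (hd : 2 ≤ d) (hdk : d + 2 ≤ k) (hc1 : 1 ≤ c) (hcd : c ≤ d) :
    ¬ (G.Adj (x i) (v (i + c)) ∧ G.Adj (v (i + c)) (x (i + d))) := by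
  rintro ⟨h1, h2⟩
  obtain rfl | hc2 := eq_or_lt_of_le hc1
  · exact C.not_adj_x_v hj (1 - d) (by push_cast; ring) (by omega) h2.symm
  · exact C.not_adj_x_v hi c (by simp) (by omega) h1

theorem exists_common_nbr_of_reachableThrough (C : IsCycleEmbedding G k v S x)
    (h6 : _root_.Free G (pathGraph 6)) {i : ZMod k} {d : ℕ} (hi : i ∈ S) (hj : i + d ∈ S)
    (hd : 1 ≤ d) (hdk : d + 2 ≤ k) (hxx : ¬ G.Adj (x i) (x (i + d)))
    (hvv : ¬ G.Adj (v i) (v (i + d + 1))) {A : Set V} (hA : A ⊆ arc v x S i d) {n : ℕ}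
    (hreach : ReachableThrough G A (x i) (x (i + d)) n) :
    ∃ u ∈ A, G.Adj (x i) u ∧ G.Adj u (x (i + d)) := by
  obtain ⟨m, p, hp0, hpm, hpA, hp⟩ := hreach.exists_isChordlessWalk
  have hvxj : ¬ G.Adj (v i) (x (i + d)) := fun h =>
    C.not_adj_x_v hj (-d) (by push_cast; ring) (by omega) h.symm
  have hlast : ∀ a < m, ¬ G.Adj (p a) (v (i + d + 1)) := by
    intro a ha
    rcases Nat.eq_zero_or_pos a with rfl | ha0
    · exact hp0 ▸ C.not_adj_x_v hi (d + 1) (by push_cast; ring) (by omega)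
    · exact C.not_adj_arc_v hj hdk (hA (hpA a ha0 ha))
  have hfirst : ∀ a, 0 < a → a ≤ m → ¬ G.Adj (v i) (p a) := by
    intro a ha0 ha
    obtain ha | rfl := ha.lt_or_eq
    · exact C.not_adj_v_arc hi hdk (hA (hpA a ha0 ha))
    · exact hpm ▸ hvxj
  have hext := (hp.snoc (hpm ▸ C.adj_aux_right _ hj) hlast).cons
    (by simpa [hp0] using C.adj_aux_left i hi) fun a ha1 ha2 => by
      split_ifs with ham
      exacts [hfirst a ha1 ham, hvv]
  have hm : m ≤ 2 := by have := hext.le_four h6; omega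
  interval_cases m
  · exact absurd (hpm ▸ hp0 ▸ C.adj_aux_left i hi) hvxj
  · exact absurd (hp0 ▸ hpm ▸ hp.adj 0 (by omega)) hxx
  · exact ⟨p 1, hpA 1 (by omega) (by omega), hp0 ▸ hp.adj 0 (by omega),
      hpm ▸ hp.adj 1 (by omega)⟩

theorem not_adj_succ_v (C : IsCycleEmbedding G k v S x) (h6 : _root_.Free G (pathGraph 6))
    {i j : ZMod k} {d : ℕ} (hi : i ∈ S) (hj : j ∈ S) (hij : i + d = j) (hd : 2 ≤ d)
    (hdk : d + 2 ≤ k) (hxx : ¬ G.Adj (x i) (x j)) : ¬ G.Adj (v (i + 1)) (v j) := by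
  have hk := C.five_le
  subst hij
  intro h
  obtain rfl | hd3 := eq_or_lt_of_le hd
  · have hA : {v (i + (1 : ℕ)), v (i + (2 : ℕ))} ⊆ arc v x S i 2 := by
      rintro u (rfl | rfl)
      · exact Or.inl ⟨1, le_rfl, by omega, rfl⟩
      · exact Or.inl ⟨2, by omega, le_rfl, rfl⟩
    have hreach :
        ReachableThrough G {v (i + (1 : ℕ)), v (i + (2 : ℕ))} (x i) (x (i + (2 : ℕ))) 3 :=
      ((ReachableThrough.single (by simpa using C.adj_aux_right i hi)).snoc (by simp)
        (by simpa using h)).snoc (by simp) (C.adj_aux_left _ hj)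
    obtain ⟨u, hu, h1, h2⟩ := C.exists_common_nbr_of_reachableThrough h6 hi hj (by omega) hdk hxx
      (C.not_adj_v_v 3 (by push_cast; ring) (by omega)) hA hreach
    rcases hu with rfl | rfl
    · exact C.not_adj_x_v_and_adj_v_x hi hj le_rfl hdk le_rfl (by omega) ⟨h1, h2⟩
    · exact C.not_adj_x_v_and_adj_v_x hi hj le_rfl hdk (by omega) le_rfl ⟨h1, h2⟩
  · exact C.not_adj_v_v (d - 1) (by push_cast; ring) (by omega) h

theorem exists_common_aux_nbr (C : IsCycleEmbedding G k v S x)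
    (h6 : _root_.Free G (pathGraph 6)) {i j : ZMod k} {d : ℕ} (hi : i ∈ S) (hj : j ∈ S)
    (hij : i + d = j) (hd : 2 ≤ d) (hdk : d + 2 ≤ k) (hxx : ¬ G.Adj (x i) (x j))
    (hvv : ¬ G.Adj (v i) (v (j + 1))) :
    ∃ r ∈ S, 0 < (r - i).val ∧ (r - i).val < d ∧ G.Adj (x i) (x r) ∧ G.Adj (x j) (x r) := by
  subst hij
  obtain ⟨n, hn⟩ := C.reachableThrough_arc hi hj (by omega)
  obtain ⟨u, hu, h1, h2⟩ :=
    C.exists_common_nbr_of_reachableThrough h6 hi hj (by omega) hdk hxx hvv subset_rfl hn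
  rcases hu with ⟨c, hc1, hcd, rfl⟩ | ⟨c, hc1, hcd, hcS, rfl⟩
  · exact absurd ⟨h1, h2⟩ (C.not_adj_x_v_and_adj_v_x hi hj hd hdk hc1 hcd)
  · have hc : (i + c - i).val = c := by
      simpa using ZMod.val_cast_of_lt (n := k) (by omega : c < k)
    exact ⟨i + c, hcS, by omega, by omega, h1, h2.symm⟩

end IsCycleEmbedding

theorem stmt11_general (G : SimpleGraph V) (h6 : _root_.Free G (pathGraph 6))
    (k : ℕ) (hk : 5 ≤ k) (v : ZMod k → V) (hinj : Function.Injective v)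
    (hnon : ∀ i j : ZMod k, j ≠ i - 1 → j ≠ i → j ≠ i + 1 → ¬ (square G).Adj (v i) (v j))
    (S : Set (ZMod k)) (x : ZMod k → V)
    (hS : ∀ i ∈ S, ¬ G.Adj (v i) (v (i + 1)) ∧ G.Adj (v i) (x i) ∧ G.Adj (x i) (v (i + 1)))
    (hS' : ∀ i ∉ S, G.Adj (v i) (v (i + 1)))
    (i j : ZMod k) (hi : i ∈ S) (hj : j ∈ S)
    (hij1 : j ≠ i - 1) (hij2 : j ≠ i) (hij3 : j ≠ i + 1)
    (hxx : ¬ G.Adj (x i) (x j)) :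
    ¬ G.Adj (v (i + 1)) (v j) ∧ ¬ G.Adj (v (j + 1)) (v i) ∧
      (∃ r ∈ S, 0 < (r - i).val ∧ (r - i).val < (j - i).val ∧
        G.Adj (x i) (x r) ∧ G.Adj (x j) (x r)) ∧
      (∃ s ∈ S, (j - i).val < (s - i).val ∧
        G.Adj (x i) (x s) ∧ G.Adj (x j) (x s)) := by
  have : NeZero k := ⟨by omega⟩
  have C : IsCycleEmbedding G k v S x := ⟨hk, hinj, hnon, fun i hi => (hS i hi).1,
    fun i hi => (hS i hi).2.1, fun i hi => (hS i hi).2.2, hS'⟩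
  obtain ⟨hd, hdk⟩ := two_le_val_sub hij1 hij2 hij3
  obtain ⟨he, hek⟩ := two_le_val_sub (i := j) (j := i) (fun h => hij3 (by rw [h]; ring))
    hij2.symm (fun h => hij1 (by rw [h]; ring))
  have hxx' : ¬ G.Adj (x j) (x i) := fun h => hxx h.symm
  have hvi := C.not_adj_succ_v h6 hj hi (by simp) he hek hxx'
  have hvj := C.not_adj_succ_v h6 hi hj (by simp) hd hdk hxx
  refine ⟨hvj, hvi, C.exists_common_aux_nbr h6 hi hj (by simp) hd hdk hxx (fun h => hvi h.symm), ?_⟩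
  obtain ⟨s, hs, hs0, hse, hxjs, hxis⟩ :=
    C.exists_common_aux_nbr h6 hj hi (by simp) he hek hxx' (fun h => hvj h.symm)
  have hde : (i - j).val = k - (j - i).val := by
    rw [← neg_sub, ZMod.neg_val, if_neg (sub_ne_zero.2 hij2)]
  refine ⟨s, hs, ?_, hxis, hxjs⟩
  rw [← sub_add_sub_cancel s j i, ZMod.val_add_of_lt (by omega)]
  omega

theorem stmt11 (G : SimpleGraph V) (h6 : _root_.Free G (pathGraph 6))
    (k : ℕ) (hk : 5 ≤ k) (v : ZMod k → V) (hinj : Function.Injective v)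
    (hadj : ∀ i : ZMod k, (square G).Adj (v i) (v (i + 1)))
    (hnon : ∀ i j : ZMod k, j ≠ i - 1 → j ≠ i → j ≠ i + 1 → ¬ (square G).Adj (v i) (v j))
    (S : Set (ZMod k)) (x : ZMod k → V)
    (hS : ∀ i ∈ S, ¬ G.Adj (v i) (v (i + 1)) ∧ G.Adj (v i) (x i) ∧ G.Adj (x i) (v (i + 1)))
    (hS' : ∀ i ∉ S, G.Adj (v i) (v (i + 1)))
    (i j : ZMod k) (hi : i ∈ S) (hj : j ∈ S)
    (hij1 : j ≠ i - 1) (hij2 : j ≠ i) (hij3 : j ≠ i + 1)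
    (hxx : ¬ G.Adj (x i) (x j)) :
    ¬ G.Adj (v (i + 1)) (v j) ∧ ¬ G.Adj (v (j + 1)) (v i) ∧
      (∃ r ∈ S, 0 < (r - i).val ∧ (r - i).val < (j - i).val ∧
        G.Adj (x i) (x r) ∧ G.Adj (x j) (x r)) ∧
      (∃ s ∈ S, (j - i).val < (s - i).val ∧
        G.Adj (x i) (x s) ∧ G.Adj (x j) (x s)) :=
  stmt11_general G h6 k hk v hinj hnon S x hS hS' i j hi hj hij1 hij2 hij3 hxx
end
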